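/- arXiv:1707.01259 — 2 statements merged into one kernel-verified Lean document; each statement's English description precedes it below -/
import Mathlib

section
/- Let σ : A → A⁺ be a substitution. For every a ∈ A_{∘,l} and every n ≥ 1, the set of letters occurring in σⁿ(a) has nonempty intersection with A_{∘,l}. -/
namespace SubstMin

variable {A : Type*}

/-- Apply a map `σ : A → A⁺` to a word by concatenation. -/
def substW (σ : A → List A) (w : List A) : List A := w.flatMap σ

/-- `n`-th iterate of the substitution applied to a word. -/
def substIter (σ : A → List A) (n : ℕ) (w : List A) : List A := (substW σ)^[n] w

/-- The set `A_l` of letters `a` with `|σⁿ(a)| → ∞`. -/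
def longLetters (σ : A → List A) : Set A :=
  {a | Filter.Tendsto (fun n => (substIter σ n [a]).length) Filter.atTop Filter.atTop}

/-- The set `A_s = A \ A_l`. -/
def shortLetters (σ : A → List A) : Set A := (longLetters σ)ᶜ

/-- `σ` is a substitution: letters map to nonempty words and `A_l ≠ ∅`. -/
def IsSubstitution (σ : A → List A) : Prop :=
  (∀ a, σ a ≠ []) ∧ (longLetters σ).Nonempty

/-- The language `L(σ)`: factors of some `σⁿ(a)`, `n ≥ 1`. -/
def lang (σ : A → List A) : Set (List A) :=
  {w | ∃ (a : A) (n : ℕ), 1 ≤ n ∧ w <:+: substIter σ n [a]}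

/-- The finite factor `x[s,t]` of a bi-infinite sequence. -/
def factorOf (x : ℤ → A) (s t : ℤ) : List A :=
  (List.range (t - s + 1).toNat).map fun i => x (s + (i : ℤ))

/-- The substitution dynamical system `X_σ`. -/
def XSub (σ : A → List A) : Set (ℤ → A) :=
  {x | ∀ s t : ℤ, s ≤ t → factorOf x s t ∈ lang σ}

/-- The left shift `T`. -/
def shiftT (x : ℤ → A) : ℤ → A := fun i => x (i + 1)

/-- A subshift is minimal if it is nonempty and has no nonempty proper closed
shift-invariant subset. -/
def IsMinimalSubshift [TopologicalSpace A] (X : Set (ℤ → A)) : Prop :=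
  X.Nonempty ∧ ∀ Y : Set (ℤ → A), Y ⊆ X → Y.Nonempty → IsClosed Y →
    shiftT '' Y = Y → Y = X

/-- `a ∈ A_l` is left isolated: `σⁿ(a) = u a w` with `u ∈ A_s⁺`, `w ∈ A*`. -/
def LeftIsolated (σ : A → List A) (a : A) : Prop :=
  ∃ n : ℕ, 1 ≤ n ∧ ∃ u w : List A, u ≠ [] ∧ (∀ b ∈ u, b ∈ shortLetters σ) ∧
    substIter σ n [a] = u ++ a :: w

/-- `a ∈ A_l` is right isolated: `σᵐ(a) = w a u` with `u ∈ A_s⁺`, `w ∈ A*`. -/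
def RightIsolated (σ : A → List A) (a : A) : Prop :=
  ∃ n : ℕ, 1 ≤ n ∧ ∃ u w : List A, u ≠ [] ∧ (∀ b ∈ u, b ∈ shortLetters σ) ∧
    substIter σ n [a] = w ++ a :: u

/-- `σ` is tame: no letter of `A_l` is left or right isolated. -/
def Tame (σ : A → List A) : Prop :=
  ∀ a ∈ longLetters σ, ¬ LeftIsolated σ a ∧ ¬ RightIsolated σ a

/-- `σ` is `l`-primitive. -/
def LPrimitive (σ : A → List A) : Prop :=
  ∃ n : ℕ, 1 ≤ n ∧ ∀ a ∈ longLetters σ, ∀ b ∈ longLetters σ, a ∈ substIter σ n [b]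

/-- `a → b` : `b` occurs in `σⁿ(a)` for some `n ≥ 1`. -/
def arrow (σ : A → List A) (a b : A) : Prop :=
  ∃ n : ℕ, 1 ≤ n ∧ b ∈ substIter σ n [a]

/-- `A_{∘,l} = {a ∈ A_l | a → a}`. -/
def circLong (σ : A → List A) : Set A := {a | a ∈ longLetters σ ∧ arrow σ a a}

/-- `A_{min,l}`: letters of `A_l` minimal in `A_l`. -/
def minLong (σ : A → List A) : Set A :=
  {a | a ∈ longLetters σ ∧ ∀ b ∈ longLetters σ, arrow σ a b → arrow σ b a}

/-- `x` is a periodic point of the shift. -/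
def IsPeriodicPoint (x : ℤ → A) : Prop := ∃ p : ℕ, 1 ≤ p ∧ shiftT^[p] x = x

/-- `X` is a single periodic orbit. -/
def IsSinglePeriodicOrbit (X : Set (ℤ → A)) : Prop :=
  ∃ x : ℤ → A, IsPeriodicPoint x ∧ X = Set.range fun i : ℤ => fun j => x (j + i)

/-- `y = σ(x)` : `y` is obtained from `x` by applying `σ` to each coordinate and
concatenating, with `σ(x(0))` placed starting at coordinate `0`. -/
def IsSubstImage (σ : A → List A) (x y : ℤ → A) : Prop :=
  ∃ o : ℤ → ℤ, o 0 = 0 ∧ (∀ i : ℤ, o (i + 1) = o i + (σ (x i)).length) ∧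
    ∀ i : ℤ, factorOf y (o i) (o (i + 1) - 1) = σ (x i)

/-- The map `s` on nonempty subsets of `A_l`: `s(F) = ⋃_{a ∈ F} (Lett(σ(a)) ∩ A_l)`. -/
def sMap (σ : A → List A) (F : Set A) : Set A :=
  {b | b ∈ longLetters σ ∧ ∃ a ∈ F, b ∈ σ a}

end SubstMin

section Aux

variable {A : Type*}

open SubstMin

lemma substIter_flatMap (σ : A → List A) (n : ℕ) (w : List A) :
    substIter σ n w = w.flatMap (fun c => substIter σ n [c]) := by
  induction n generalizing w with
  | zero => simp [substIter]
  | succ n ih =>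
      have h : ∀ v : List A, substIter σ (n + 1) v = substW σ (substIter σ n v) := by
        intro v
        simp [substIter, Function.iterate_succ_apply']
      rw [h, ih, substW, List.flatMap_assoc]
      congr 1
      funext c
      rw [← substW, ← h]

lemma mem_substIter_iff {σ : A → List A} {n : ℕ} {w : List A} {b : A} :
    b ∈ substIter σ n w ↔ ∃ c ∈ w, b ∈ substIter σ n [c] := by
  rw [substIter_flatMap]; exact List.mem_flatMap

lemma substIter_add (σ : A → List A) (m n : ℕ) (w : List A) :
    substIter σ (m + n) w = substIter σ m (substIter σ n w) :=
  Function.iterate_add_apply _ m n w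

lemma substIter_trans {σ : A → List A} {p q : ℕ} {a c d : A}
    (hc : c ∈ substIter σ p [a]) (hd : d ∈ substIter σ q [c]) :
    d ∈ substIter σ (q + p) [a] := by
  rw [substIter_add, mem_substIter_iff]
  exact ⟨c, hc, hd⟩

lemma length_le_of_mem {σ : A → List A} {n : ℕ} {w : List A} {c : A} (hc : c ∈ w) :
    (substIter σ n [c]).length ≤ (substIter σ n w).length := by
  rw [substIter_flatMap σ n w, List.length_flatMap]
  exact List.single_le_sum (fun x _ => Nat.zero_le x) _
    (List.mem_map.2 ⟨c, hc, rfl⟩)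

end Aux

open SubstMin in
/-- For every `a ∈ A_{∘,l}` and `n ≥ 1`, `Lett(σⁿ(a)) ∩ A_{∘,l} ≠ ∅`. -/
theorem statement7 {A : Type*} [Fintype A] (σ : A → List A)
    (hσ : SubstMin.IsSubstitution σ) :
    ∀ a ∈ SubstMin.circLong σ, ∀ n : ℕ, 1 ≤ n →
      ∃ b ∈ SubstMin.substIter σ n [a], b ∈ SubstMin.circLong σ := by
  intro a ha n hn
  obtain ⟨hal, k, hk1, hka⟩ := ha
  -- a occurs in σ^{m·k}(a) for every m
  have hmul : ∀ m : ℕ, a ∈ substIter σ (m * k) [a] := by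
    intro m
    induction m with
    | zero => simp [substIter]
    | succ m ih =>
        have := substIter_trans ih hka
        have he : (m + 1) * k = k + m * k := by ring
        rwa [he]
  set N := (n + 1) * k with hN
  have hnN : n < N := by
    calc n < n + 1 := Nat.lt_succ_self n
    _ ≤ (n + 1) * k := Nat.le_mul_of_pos_right _ hk1
  set j := N - n with hj
  have hj1 : 1 ≤ j := Nat.le_sub_of_add_le (by omega)
  have hjn : j + n = N := by omega
  have haN : a ∈ substIter σ N [a] := hmul (n + 1)
  rw [← hjn, substIter_add, mem_substIter_iff] at haN
  obtain ⟨b, hb, hab⟩ := haN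
  refine ⟨b, hb, ?_, ?_⟩
  · -- b is a long letter
    have hmono : ∀ᶠ M in Filter.atTop,
        (substIter σ (M - j) [a]).length ≤ (substIter σ M [b]).length := by
      filter_upwards [Filter.eventually_ge_atTop j] with M hM
      have hMj : M - j + j = M := Nat.sub_add_cancel hM
      calc (substIter σ (M - j) [a]).length
          ≤ (substIter σ (M - j) (substIter σ j [b])).length :=
            length_le_of_mem hab
        _ = (substIter σ M [b]).length := by rw [← substIter_add, hMj]
    have htend : Filter.Tendsto (fun M => (substIter σ (M - j) [a]).length)
        Filter.atTop Filter.atTop :=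
      hal.comp (Filter.tendsto_sub_atTop_nat j)
    exact Filter.tendsto_atTop_mono' _ hmono htend
  · -- b → b
    exact ⟨n + j, by omega, substIter_trans hab hb⟩
end

section
/- Let σ : A → A⁺ be a substitution. If some letter of A_l is left isolated or right isolated, then the substitution dynamical system (X_σ, T) contains a periodic point. -/
/-!
If `σⁿ(a) = u a w` with `u` a nonempty word of short letters, then `σ^{kn}(a)` begins with
`σ^{(k-1)n}(u) ⋯ σⁿ(u) u a`. The words `σ^{jn}(u)` have bounded length, so they are eventually
periodic in `j`; hence `L(σ)` contains every power of one nonempty word `W`, and the periodic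
point `⋯WWW⋯` lies in `X_σ`. Right isolation reduces to left isolation for the substitution
`b ↦ σ(b)` read backwards.
-/

namespace SubstMin

open Function

section AppendHom

variable {α : Type*} {f : List α → List α}

lemma map_nil_of_map_append (hf : ∀ x y, f (x ++ y) = f x ++ f y) : f [] = [] := by
  simpa using hf [] []

lemma iterate_append_of_map_append (hf : ∀ x y, f (x ++ y) = f x ++ f y) (n : ℕ)
    (x y : List α) : f^[n] (x ++ y) = f^[n] x ++ f^[n] y := by
  induction n generalizing x y with
  | zero => rfl
  | succ n ih => rw [iterate_succ_apply, hf, ih, iterate_succ_apply, iterate_succ_apply]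

lemma iterate_ne_nil (hf : ∀ x, x ≠ [] → f x ≠ []) {x : List α} (hx : x ≠ []) (n : ℕ) :
    f^[n] x ≠ [] := by
  induction n with
  | zero => exact hx
  | succ n ih => rw [iterate_succ_apply']; exact hf _ ih

lemma isPeriodicPt_append (hf : ∀ x y, f (x ++ y) = f x ++ f y) {q : ℕ} {x y : List α}
    (hx : IsPeriodicPt f q x) (hy : IsPeriodicPt f q y) : IsPeriodicPt f q (x ++ y) := by
  rw [IsPeriodicPt, IsFixedPt, iterate_append_of_map_append hf, hx.eq, hy.eq]

def orbitPrefix (f : List α → List α) (u : List α) : ℕ → List α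
  | 0 => []
  | k + 1 => f^[k] u ++ orbitPrefix f u k

lemma orbitPrefix_ne_nil (hf : ∀ x, x ≠ [] → f x ≠ []) {u : List α} (hu : u ≠ [])
    {k : ℕ} (hk : 0 < k) : orbitPrefix f u k ≠ [] := by
  obtain ⟨k, rfl⟩ := Nat.exists_eq_add_of_lt hk
  exact List.append_ne_nil_of_left_ne_nil (iterate_ne_nil hf hu _) _

lemma exists_iterate_eq_orbitPrefix_append (hf : ∀ x y, f (x ++ y) = f x ++ f y)
    {a u w : List α} (h : f a = u ++ a ++ w) (k : ℕ) :
    ∃ t, f^[k] a = orbitPrefix f u k ++ a ++ t := by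
  induction k with
  | zero => exact ⟨[], by simp [orbitPrefix]⟩
  | succ k ih =>
    obtain ⟨t, ht⟩ := ih
    refine ⟨t ++ f^[k] w, ?_⟩
    rw [iterate_succ_apply, h, iterate_append_of_map_append hf,
      iterate_append_of_map_append hf, ht]
    simp [orbitPrefix]

lemma isPeriodicPt_iterate_orbitPrefix (hf : ∀ x y, f (x ++ y) = f x ++ f y) {u : List α}
    {K q : ℕ} (hu : IsPeriodicPt f q (f^[K] u)) (k : ℕ) :
    IsPeriodicPt f q (f^[K] (orbitPrefix f u k)) := by
  induction k with
  | zero =>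
    have hnil := iterate_fixed (map_nil_of_map_append hf)
    show f^[q] (f^[K] []) = f^[K] []
    rw [hnil, hnil]
  | succ k ih =>
    rw [orbitPrefix, iterate_append_of_map_append hf, ← iterate_add_apply, add_comm,
      iterate_add_apply]
    exact isPeriodicPt_append hf (hu.apply_iterate k) ih

lemma exists_iterate_eq_flatten_replicate_append (hf : ∀ x y, f (x ++ y) = f x ++ f y)
    {y W z : List α} (hy : f y = W ++ y ++ z) (hW : IsFixedPt f W) (m : ℕ) :
    ∃ t, f^[m] y = (List.replicate m W).flatten ++ y ++ t := by
  induction m with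
  | zero => exact ⟨[], by simp⟩
  | succ m ih =>
    obtain ⟨t, ht⟩ := ih
    refine ⟨t ++ f^[m] z, ?_⟩
    rw [iterate_succ_apply, hy, iterate_append_of_map_append hf,
      iterate_append_of_map_append hf, ht, iterate_fixed hW]
    simp [List.replicate_succ]

lemma exists_isPeriodicPt_iterate_of_finite_range {β : Type*} (g : β → β) (x : β)
    (h : (Set.range fun n => g^[n] x).Finite) : ∃ K q, 0 < q ∧ IsPeriodicPt g q (g^[K] x) := by
  obtain ⟨i, j, hij, heq⟩ :=
    Set.Finite.exists_lt_map_eq_of_forall_mem (f := fun n => g^[n] x) (Set.mem_range_self) h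
  refine ⟨i, j - i, Nat.sub_pos_of_lt hij, ?_⟩
  rw [IsPeriodicPt, IsFixedPt, ← iterate_add_apply, Nat.sub_add_cancel hij.le]
  exact heq.symm

/-- The witness is `W = f^[K] (f^[q-1] u ⋯ f u u)`, where `f^[K] u` has period `q`: it is fixed
by `f^[q]`, and the `f^[q]`-iterates of `f^[K] a` start with ever higher powers of `W`. -/
lemma exists_flatten_replicate_infix_iterate (hf : ∀ x y, f (x ++ y) = f x ++ f y)
    (hne : ∀ x, x ≠ [] → f x ≠ []) {a u w : List α} (h : f a = u ++ a ++ w) (hu : u ≠ [])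
    (hfin : (Set.range fun n => f^[n] u).Finite) :
    ∃ W ≠ [], ∀ m, ∃ N, 0 < N ∧ (List.replicate m W).flatten <:+: f^[N] a := by
  obtain ⟨K, q, hq, hper⟩ := exists_isPeriodicPt_iterate_of_finite_range f u hfin
  obtain ⟨t, ht⟩ := exists_iterate_eq_orbitPrefix_append hf h q
  set W := f^[K] (orbitPrefix f u q)
  have hy : f^[q] (f^[K] a) = W ++ f^[K] a ++ f^[K] t := by
    rw [← iterate_add_apply, add_comm, iterate_add_apply, ht,
      iterate_append_of_map_append hf, iterate_append_of_map_append hf]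
  have hW : IsFixedPt f^[q] W := isPeriodicPt_iterate_orbitPrefix hf hper q
  refine ⟨W, iterate_ne_nil hne (orbitPrefix_ne_nil hne hu hq) K, fun m => ?_⟩
  obtain ⟨s, hs⟩ := exists_iterate_eq_flatten_replicate_append
    (iterate_append_of_map_append hf q) hy hW (m + 1)
  refine ⟨q * (m + 1) + K, lt_add_of_pos_of_le (Nat.mul_pos hq m.succ_pos) K.zero_le, ?_⟩
  rw [iterate_add_apply, iterate_mul, hs, List.replicate_succ, List.flatten_cons]
  exact ⟨W, f^[K] a ++ s, by simp⟩

end AppendHom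

section Substitution

variable {A : Type*} {σ : A → List A}

lemma substW_append (x y : List A) : substW σ (x ++ y) = substW σ x ++ substW σ y :=
  List.flatMap_append

lemma substIter_append (n : ℕ) (x y : List A) :
    substIter σ n (x ++ y) = substIter σ n x ++ substIter σ n y :=
  iterate_append_of_map_append substW_append n x y

lemma substIter_ne_nil (hne : ∀ a, σ a ≠ []) (n : ℕ) (x : List A) (hx : x ≠ []) :
    substIter σ n x ≠ [] :=
  iterate_ne_nil (fun x hx => by
    obtain ⟨b, l, rfl⟩ := List.exists_cons_of_ne_nil hx
    simp [substW, hne b]) hx n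

lemma length_le_length_substW (hne : ∀ a, σ a ≠ []) (x : List A) :
    x.length ≤ (substW σ x).length := by
  induction x with
  | nil => simp
  | cons b x ih =>
    have hb : 0 < (σ b).length := List.length_pos_iff.mpr (hne b)
    simp only [substW, List.flatMap_cons, List.length_append, List.length_cons] at ih ⊢
    omega

lemma monotone_length_substIter (hne : ∀ a, σ a ≠ []) (x : List A) :
    Monotone fun m => (substIter σ m x).length :=
  monotone_nat_of_le_succ fun m => by
    simpa only [substIter, iterate_succ_apply'] using length_le_length_substW hne _

lemma exists_bound_length_substIter_singleton (hne : ∀ a, σ a ≠ []) {b : A}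
    (hb : b ∈ shortLetters σ) : ∃ B, ∀ m, (substIter σ m [b]).length ≤ B := by
  by_contra! hc
  exact hb <| Filter.tendsto_atTop_atTop_of_monotone (monotone_length_substIter hne [b])
    fun B => (hc B).imp fun _ => le_of_lt

lemma exists_bound_length_substIter (hne : ∀ a, σ a ≠ []) {u : List A}
    (hu : ∀ b ∈ u, b ∈ shortLetters σ) : ∃ B, ∀ m, (substIter σ m u).length ≤ B := by
  induction u with
  | nil => exact ⟨0, fun m => by simp [substIter, iterate_fixed (show substW σ [] = [] from rfl)]⟩
  | cons b u ih =>
    obtain ⟨B, hB⟩ := ih fun c hc => hu c (List.mem_cons_of_mem b hc)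
    obtain ⟨Bb, hBb⟩ := exists_bound_length_substIter_singleton hne (hu b List.mem_cons_self)
    refine ⟨Bb + B, fun m => ?_⟩
    rw [← List.singleton_append, substIter_append, List.length_append]
    exact Nat.add_le_add (hBb m) (hB m)

lemma finite_range_iterate_substIter [Finite A] (hne : ∀ a, σ a ≠ []) {u : List A}
    (hu : ∀ b ∈ u, b ∈ shortLetters σ) (n : ℕ) :
    (Set.range fun j => (substIter σ n)^[j] u).Finite := by
  obtain ⟨B, hB⟩ := exists_bound_length_substIter hne hu
  refine (List.finite_length_le A B).subset ?_
  rintro _ ⟨j, rfl⟩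
  have := hB (n * j)
  rwa [substIter, iterate_mul] at this

lemma exists_flatten_replicate_mem_lang_of_leftIsolated [Finite A] (hne : ∀ a, σ a ≠ [])
    {a : A} (ha : LeftIsolated σ a) : ∃ W ≠ [], ∀ m, (List.replicate m W).flatten ∈ lang σ := by
  obtain ⟨n, hn, u, w, hu, hus, heq⟩ := ha
  obtain ⟨W, hW, hpow⟩ := exists_flatten_replicate_infix_iterate (substIter_append n)
    (substIter_ne_nil hne n) (a := [a]) (by simpa using heq) hu
    (finite_range_iterate_substIter hne hus n)
  refine ⟨W, hW, fun m => ?_⟩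
  obtain ⟨N, hN, hinfix⟩ := hpow m
  refine ⟨a, n * N, Nat.mul_pos hn hN, ?_⟩
  rwa [substIter, iterate_mul]

end Substitution

section Reversal

variable {A : Type*} {σ : A → List A}

def revSubst (σ : A → List A) : A → List A := fun b => (σ b).reverse

lemma substIter_revSubst_reverse (n : ℕ) (x : List A) :
    substIter (revSubst σ) n x.reverse = (substIter σ n x).reverse := by
  induction n with
  | zero => rfl
  | succ n ih =>
    simp only [substIter, iterate_succ_apply'] at ih ⊢
    rw [ih, substW, substW, List.reverse_flatMap]
    rfl

lemma substIter_revSubst_singleton (n : ℕ) (a : A) :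
    substIter (revSubst σ) n [a] = (substIter σ n [a]).reverse := by
  simpa using substIter_revSubst_reverse (σ := σ) n [a]

lemma shortLetters_revSubst : shortLetters (revSubst σ) = shortLetters σ := by
  simp [shortLetters, longLetters, substIter_revSubst_singleton]

lemma leftIsolated_revSubst {a : A} (ha : RightIsolated σ a) : LeftIsolated (revSubst σ) a := by
  obtain ⟨n, hn, u, w, hu, hus, heq⟩ := ha
  refine ⟨n, hn, u.reverse, w.reverse, by simpa using hu, ?_, ?_⟩
  · simpa [shortLetters_revSubst] using hus
  · simp [substIter_revSubst_singleton, heq]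

lemma reverse_mem_lang_of_mem_lang_revSubst {w : List A} (hw : w ∈ lang (revSubst σ)) :
    w.reverse ∈ lang σ := by
  obtain ⟨a, n, hn, hinfix⟩ := hw
  refine ⟨a, n, hn, ?_⟩
  rw [substIter_revSubst_singleton] at hinfix
  simpa using List.reverse_infix.mpr hinfix

lemma revSubst_ne_nil (hne : ∀ a, σ a ≠ []) (a : A) : revSubst σ a ≠ [] := by
  simpa [revSubst] using hne a

lemma exists_flatten_replicate_mem_lang_of_rightIsolated [Finite A] (hne : ∀ a, σ a ≠ [])
    {a : A} (ha : RightIsolated σ a) : ∃ W ≠ [], ∀ m, (List.replicate m W).flatten ∈ lang σ := by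
  obtain ⟨W, hW, hpow⟩ := exists_flatten_replicate_mem_lang_of_leftIsolated
    (revSubst_ne_nil hne) (leftIsolated_revSubst ha)
  refine ⟨W.reverse, by simpa using hW, fun m => ?_⟩
  simpa [List.reverse_flatten] using reverse_mem_lang_of_mem_lang_revSubst (hpow m)

end Reversal

section PeriodicPoint

variable {A : Type*}

-- The cast in `factorOf` elaborates as a monadic lift of `List.range` to `List ℤ`.
lemma factorOf_eq_map_range (x : ℤ → A) (s t : ℤ) :
    factorOf x s t = (List.range (t - s + 1).toNat).map fun i : ℕ => x (s + i) := by
  simp only [factorOf, List.pure_def, List.bind_eq_flatMap, ← List.map_eq_flatMap, List.map_map]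
  rfl

lemma factorOf_append (x : ℤ → A) {s m t : ℤ} (h1 : s ≤ m + 1) (h2 : m ≤ t) :
    factorOf x s m ++ factorOf x (m + 1) t = factorOf x s t := by
  rw [factorOf_eq_map_range, factorOf_eq_map_range, factorOf_eq_map_range,
    show (t - s + 1).toNat = (m - s + 1).toNat + (t - (m + 1) + 1).toNat by omega,
    List.range_add, List.map_append, List.map_map]
  congr 1
  refine List.map_congr_left fun i _ => ?_
  simp only [Function.comp_apply]
  congr 1
  push_cast
  omega

lemma factorOf_infix_factorOf (x : ℤ → A) {s₀ s t t₀ : ℤ} (hs : s₀ ≤ s) (hst : s ≤ t + 1)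
    (ht : t ≤ t₀) : factorOf x s t <:+: factorOf x s₀ t₀ := by
  rw [← factorOf_append x (s := s₀) (m := s - 1) (t := t₀) (by omega) (by omega), sub_add_cancel,
    ← factorOf_append x hst ht]
  exact ⟨factorOf x s₀ (s - 1), factorOf x (t + 1) t₀, by simp⟩

lemma factorOf_add_of_periodic {x : ℤ → A} {c : ℤ} (hx : Periodic x c) (s t : ℤ) :
    factorOf x (s + c) (t + c) = factorOf x s t := by
  rw [factorOf_eq_map_range, factorOf_eq_map_range, show t + c - (s + c) + 1 = t - s + 1 by ring]
  refine List.map_congr_left fun i _ => ?_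
  rw [add_right_comm, hx]

/-- The default `d` is never read when `W ≠ []`. -/
def periodicExt (W : List A) (d : A) : ℤ → A := fun i => W.getD (i % W.length).toNat d

lemma periodic_periodicExt (W : List A) (d : A) : Periodic (periodicExt W d) (W.length : ℤ) :=
  fun i => by simp [periodicExt]

lemma factorOf_periodicExt_zero (W : List A) (d : A) :
    factorOf (periodicExt W d) 0 (W.length - 1) = W := by
  refine List.ext_getElem (by simp [factorOf_eq_map_range]) fun i _ h => ?_
  have hi : ((i : ℤ) % W.length) = i := Int.emod_eq_of_lt (by positivity) (by exact_mod_cast h)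
  simp [factorOf_eq_map_range, periodicExt, hi, h]

lemma factorOf_periodicExt_flatten_replicate (W : List A) (d : A) (m : ℕ) :
    factorOf (periodicExt W d) 0 (m * W.length - 1) = (List.replicate m W).flatten := by
  induction m with
  | zero => simp [factorOf_eq_map_range]
  | succ m ih =>
    have hp : (0 : ℤ) ≤ W.length := by positivity
    have hm : (0 : ℤ) ≤ m * W.length := by positivity
    have hshift := factorOf_add_of_periodic (periodic_periodicExt W d) 0 (m * W.length - 1)
    rw [zero_add] at hshift
    rw [← factorOf_append _ (m := W.length - 1) (by omega) (by push_cast; linarith),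
      factorOf_periodicExt_zero, sub_add_cancel,
      show ((m + 1 : ℕ) : ℤ) * W.length - 1 = (m * W.length - 1) + W.length by push_cast; ring,
      hshift, ih]
    rfl

lemma exists_factorOf_periodicExt_infix_flatten_replicate {W : List A} (hW : W ≠ [])
    (d : A) {s t : ℤ} (hst : s ≤ t) :
    ∃ m, factorOf (periodicExt W d) s t <:+: (List.replicate m W).flatten := by
  have hp : (0 : ℤ) < W.length := by simpa using List.length_pos_iff.mpr hW
  set k := s / W.length
  have hs : 0 ≤ s - k * W.length := by
    rw [mul_comm, ← Int.emod_def]; exact Int.emod_nonneg s hp.ne'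
  have hshift := factorOf_add_of_periodic ((periodic_periodicExt W d).int_mul k)
    (s - k * W.length) (t - k * W.length)
  simp only [Int.cast_id, sub_add_cancel] at hshift
  refine ⟨(t - k * W.length).toNat + 1, ?_⟩
  rw [hshift, ← factorOf_periodicExt_flatten_replicate W d]
  refine factorOf_infix_factorOf _ hs (by omega) ?_
  push_cast
  nlinarith [Int.self_le_toNat (t - k * W.length)]

lemma periodicExt_mem_XSub {σ : A → List A} {W : List A} (hW : W ≠ []) (d : A)
    (hlang : ∀ m, (List.replicate m W).flatten ∈ lang σ) : periodicExt W d ∈ XSub σ := by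
  intro s t hst
  obtain ⟨m, hinfix⟩ := exists_factorOf_periodicExt_infix_flatten_replicate hW d hst
  obtain ⟨a, n, hn, hmem⟩ := hlang m
  exact ⟨a, n, hn, hinfix.trans hmem⟩

lemma iterate_shiftT_apply (k : ℕ) (x : ℤ → A) (i : ℤ) : shiftT^[k] x i = x (i + k) := by
  induction k generalizing x with
  | zero => simp
  | succ k ih => rw [iterate_succ_apply, ih, shiftT]; push_cast; ring_nf

lemma isPeriodicPoint_of_periodic {x : ℤ → A} {p : ℕ} (hp : 0 < p) (hx : Periodic x (p : ℤ)) :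
    IsPeriodicPoint x :=
  ⟨p, hp, funext fun i => by rw [iterate_shiftT_apply, hx]⟩

end PeriodicPoint

end SubstMin

/-- If some letter of `A_l` is left or right isolated, then `X_σ`
contains a periodic point. -/
theorem statement9 {A : Type*} [Fintype A] (σ : A → List A)
    (hσ : SubstMin.IsSubstitution σ)
    (h : ∃ a ∈ SubstMin.longLetters σ,
      SubstMin.LeftIsolated σ a ∨ SubstMin.RightIsolated σ a) :
    ∃ x ∈ SubstMin.XSub σ, SubstMin.IsPeriodicPoint x := by
  obtain ⟨a, -, hiso⟩ := h
  obtain ⟨W, hW, hlang⟩ :=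
    hiso.elim (SubstMin.exists_flatten_replicate_mem_lang_of_leftIsolated hσ.1)
      (SubstMin.exists_flatten_replicate_mem_lang_of_rightIsolated hσ.1)
  exact ⟨SubstMin.periodicExt W (W.head hW), SubstMin.periodicExt_mem_XSub hW _ hlang,
    SubstMin.isPeriodicPoint_of_periodic (List.length_pos_iff.mpr hW)
      (SubstMin.periodic_periodicExt W _)⟩
end
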